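/- arXiv:1602.00220 — 2 statements merged into one kernel-verified Lean document; each statement's English description precedes it below -/
import Mathlib

section
/- Let f : ℝ^d → ℝ be continuous and bounded below, let α > 0, and let (ρ_t)_{t ≥ 0} be a family of Borel probability measures on ℝ^d with finite second moments such that V(ρ_t) → 0 and E(ρ_t) → x̃ ∈ ℝ^d as t → ∞. Suppose furthermore that there is b ≥ 0 such that (∫ exp(−α f) dρ₀)² ≤ (∫ exp(−α f) dρ_t)² + b for all t ≥ 0. Then (∫ exp(−α f) dρ₀)² ≤ exp(−2α f(x̃)) + b; equivalently, −(1/α) log(∫ exp(−α f) dρ₀) ≥ f(x̃) − (1/(2α)) log(1 + b·exp(2α f(x̃))). -/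
/-!
The variances vanish and the means converge to `x̃`, so the second moments of `ρ t` about `x̃`
vanish. Since `f` is bounded below, the weight `exp (-α f)` is bounded and continuous, and this
concentration forces `∫ exp (-α f) dρ t → exp (-α f x̃)`. Passing to the limit in the mass
inequality gives the first bound; taking logarithms gives the second.
-/

open MeasureTheory Filter Topology Real

section Metric

variable {E : Type*} [PseudoMetricSpace E]

lemma exists_abs_sub_le_add_mul_dist_sq {g : E → ℝ} {c : E} {M : ℝ} (hgc : ContinuousAt g c)
    (hgM : ∀ x, |g x| ≤ M) {ε : ℝ} (hε : 0 < ε) :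
    ∃ C, ∀ x, |g x - g c| ≤ ε + C * dist x c ^ 2 := by
  obtain ⟨δ, hδ, hδg⟩ := Metric.continuousAt_iff.1 hgc ε hε
  -- Off the `δ`-ball, `C * dist x c ^ 2 ≥ 2 * M` already dominates the oscillation of `g`.
  refine ⟨2 * M / δ ^ 2, fun x => ?_⟩
  rcases lt_or_ge (dist x c) δ with hx | hx
  · have : 0 ≤ 2 * M / δ ^ 2 * dist x c ^ 2 := by
      have := (abs_nonneg _).trans (hgM c); positivity
    linarith [hδg hx, Real.dist_eq (g x) (g c)]
  · have hfar : 2 * M ≤ 2 * M / δ ^ 2 * dist x c ^ 2 := by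
      rw [div_mul_comm]
      refine le_mul_of_one_le_left (by linarith [(abs_nonneg _).trans (hgM c)]) ?_
      rw [one_le_div (by positivity)]
      gcongr
    linarith [abs_sub (g x) (g c), hgM x, hgM c]

variable [MeasurableSpace E] [OpensMeasurableSpace E] {ι : Type*} {l : Filter ι}

lemma tendsto_integral_of_tendsto_integral_dist_sq {μ : ι → Measure E}
    [∀ i, IsProbabilityMeasure (μ i)] {g : E → ℝ} {c : E} {M : ℝ} (hg : Continuous g)
    (hgM : ∀ x, |g x| ≤ M) (hint : ∀ i, Integrable (fun x => dist x c ^ 2) (μ i))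
    (hmom : Tendsto (fun i => ∫ x, dist x c ^ 2 ∂μ i) l (𝓝 0)) :
    Tendsto (fun i => ∫ x, g x ∂μ i) l (𝓝 (g c)) := by
  rw [Metric.tendsto_nhds]
  intro ε hε
  obtain ⟨C, hgC⟩ := exists_abs_sub_le_add_mul_dist_sq hg.continuousAt hgM (half_pos hε)
  have hgint : ∀ i, Integrable g (μ i) := fun i =>
    (integrable_const M).mono' hg.aestronglyMeasurable (.of_forall hgM)
  filter_upwards [(hmom.const_mul C).eventually_lt_const
    (show C * 0 < ε / 2 by simpa using half_pos hε)] with i hi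
  calc dist (∫ x, g x ∂μ i) (g c) = |∫ x, (g x - g c) ∂μ i| := by
        rw [Real.dist_eq, integral_sub (hgint i) (integrable_const _), integral_const,
          probReal_univ, one_smul]
    _ ≤ ∫ x, |g x - g c| ∂μ i := abs_integral_le_integral_abs
    _ ≤ ∫ x, (ε / 2 + C * dist x c ^ 2) ∂μ i :=
        integral_mono ((hgint i).sub (integrable_const _)).abs
          ((integrable_const _).add ((hint i).const_mul C)) hgC
    _ = ε / 2 + C * ∫ x, dist x c ^ 2 ∂μ i := by
        rw [integral_add (integrable_const _) ((hint i).const_mul C), integral_const_mul,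
          integral_const, probReal_univ, one_smul]
    _ < ε := by linarith

end Metric

section Normed

variable {E : Type*} [NormedAddCommGroup E] [MeasurableSpace E] {μ : Measure E}

lemma integrable_norm_sub_sq [BorelSpace E] [SecondCountableTopology E] [IsFiniteMeasure μ]
    (h : Integrable (fun x => ‖x‖ ^ 2) μ) (c : E) :
    Integrable (fun x => ‖x - c‖ ^ 2) μ := by
  have : MemLp id 2 μ := (memLp_two_iff_integrable_sq_norm aestronglyMeasurable_id).2 h
  simpa using (this.sub (memLp_const c)).integrable_norm_pow two_ne_zero

lemma integral_norm_sub_sq_le [IsProbabilityMeasure μ] (c m : E)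
    (hm : Integrable (fun x => ‖x - m‖ ^ 2) μ) :
    ∫ x, ‖x - c‖ ^ 2 ∂μ ≤ 2 * ∫ x, ‖x - m‖ ^ 2 ∂μ + 2 * ‖m - c‖ ^ 2 := by
  calc ∫ x, ‖x - c‖ ^ 2 ∂μ ≤ ∫ x, (2 * ‖x - m‖ ^ 2 + 2 * ‖m - c‖ ^ 2) ∂μ := by
        refine integral_mono_of_nonneg (.of_forall fun x => by positivity)
          ((hm.const_mul 2).add (integrable_const _)) (.of_forall fun x => ?_)
        calc ‖x - c‖ ^ 2 ≤ (‖x - m‖ + ‖m - c‖) ^ 2 := by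
              gcongr; exact norm_sub_le_norm_sub_add_norm_sub x m c
          _ ≤ _ := by linarith [add_sq_le (a := ‖x - m‖) (b := ‖m - c‖)]
    _ = _ := by
        rw [integral_add (hm.const_mul 2) (integrable_const _), integral_const_mul,
          integral_const, probReal_univ, one_smul]

lemma tendsto_integral_norm_sub_sq {ι : Type*} {l : Filter ι} {μ : ι → Measure E}
    [∀ i, IsProbabilityMeasure (μ i)] {m : ι → E} {c : E}
    (hint : ∀ i, Integrable (fun x => ‖x - m i‖ ^ 2) (μ i))
    (hvar : Tendsto (fun i => ∫ x, ‖x - m i‖ ^ 2 ∂μ i) l (𝓝 0)) (hm : Tendsto m l (𝓝 c)) :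
    Tendsto (fun i => ∫ x, ‖x - c‖ ^ 2 ∂μ i) l (𝓝 0) := by
  have hbound : Tendsto (fun i => 2 * ∫ x, ‖x - m i‖ ^ 2 ∂μ i + 2 * ‖m i - c‖ ^ 2) l (𝓝 0) := by
    simpa using (hvar.const_mul 2).add (((hm.sub_const c).norm.pow 2).const_mul 2)
  exact squeeze_zero (fun i => integral_nonneg fun x => by positivity)
    (fun i => integral_norm_sub_sq_le c (m i) (hint i)) hbound

end Normed

lemma le_neg_inv_mul_log_of_sq_le_exp_add {A α y b : ℝ} (hA : 0 < A) (hα : 0 < α)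
    (h : A ^ 2 ≤ exp (-2 * α * y) + b) :
    y - 1 / (2 * α) * log (1 + b * exp (2 * α * y)) ≤ -(1 / α) * log A := by
  have hfactor : exp (-2 * α * y) + b = exp (-2 * α * y) * (1 + b * exp (2 * α * y)) := by
    rw [mul_add, mul_one, mul_left_comm, ← exp_add]; ring_nf; simp
  have hpos : 0 < 1 + b * exp (2 * α * y) :=
    pos_of_mul_pos_right (hfactor ▸ (pow_pos hA 2).trans_le h) (exp_pos _).le
  have hlog : 2 * log A ≤ -2 * α * y + log (1 + b * exp (2 * α * y)) := by
    have := log_le_log (pow_pos hA 2) (hfactor ▸ h)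
    rwa [log_pow, log_mul (exp_ne_zero _) hpos.ne', log_exp, Nat.cast_ofNat] at this
  calc y - 1 / (2 * α) * log (1 + b * exp (2 * α * y))
      = 1 / (2 * α) * (2 * α * y - log (1 + b * exp (2 * α * y))) := by field_simp
    _ ≤ 1 / (2 * α) * (-2 * log A) := by gcongr; linarith
    _ = -(1 / α) * log A := by field_simp

theorem consensus_point_near_minimum_general {d : ℕ} (f : EuclideanSpace ℝ (Fin d) → ℝ)
    (hf : Continuous f) (hbdd : BddBelow (Set.range f))
    (α : ℝ) (hα : 0 < α)
    (ρ : ℝ → Measure (EuclideanSpace ℝ (Fin d)))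
    (hprob : ∀ t, IsProbabilityMeasure (ρ t))
    (hint : ∀ t, Integrable (fun x => ‖x‖ ^ 2) (ρ t))
    (xt : EuclideanSpace ℝ (Fin d))
    (hvar : Tendsto (fun t => (1 / 2 : ℝ) * ∫ x, ‖x - ∫ y, y ∂(ρ t)‖ ^ 2 ∂(ρ t))
      atTop (nhds 0))
    (hmean : Tendsto (fun t => ∫ x, x ∂(ρ t)) atTop (nhds xt))
    (b : ℝ)
    (hmass : ∀ t ≥ (0 : ℝ),
      (∫ x, Real.exp (-α * f x) ∂(ρ 0)) ^ 2 ≤ (∫ x, Real.exp (-α * f x) ∂(ρ t)) ^ 2 + b) :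
    (∫ x, Real.exp (-α * f x) ∂(ρ 0)) ^ 2 ≤ Real.exp (-2 * α * f xt) + b ∧
      -(1 / α) * Real.log (∫ x, Real.exp (-α * f x) ∂(ρ 0)) ≥
        f xt - 1 / (2 * α) * Real.log (1 + b * Real.exp (2 * α * f xt)) := by
  obtain ⟨B, hB⟩ := hbdd
  have hweight_le : ∀ x, |exp (-α * f x)| ≤ exp (-α * B) := fun x => by
    rw [abs_of_pos (exp_pos _), exp_le_exp]
    nlinarith [hB (Set.mem_range_self x)]
  have hmoment : Tendsto (fun t => ∫ x, dist x xt ^ 2 ∂ρ t) atTop (𝓝 0) := by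
    simp_rw [dist_eq_norm]
    refine tendsto_integral_norm_sub_sq (fun t => integrable_norm_sub_sq (hint t) _) ?_ hmean
    simpa using hvar.const_mul 2
  have hlim : Tendsto (fun t => ∫ x, exp (-α * f x) ∂ρ t) atTop (𝓝 (exp (-α * f xt))) :=
    tendsto_integral_of_tendsto_integral_dist_sq (by fun_prop) hweight_le
      (fun t => by simpa only [dist_eq_norm] using integrable_norm_sub_sq (hint t) xt) hmoment
  have hbound : (∫ x, exp (-α * f x) ∂ρ 0) ^ 2 ≤ exp (-2 * α * f xt) + b := by
    have hsq : exp (-α * f xt) ^ 2 = exp (-2 * α * f xt) := by rw [← exp_nat_mul]; ring_nf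
    exact hsq ▸ ge_of_tendsto ((hlim.pow 2).add_const b) (eventually_atTop.2 ⟨0, hmass⟩)
  have hpos : 0 < ∫ x, exp (-α * f x) ∂ρ 0 :=
    integral_exp_pos ((integrable_const _).mono' (by fun_prop) (.of_forall hweight_le))
  exact ⟨hbound, le_neg_inv_mul_log_of_sq_le_exp_add hpos hα hbound⟩

theorem consensus_point_near_minimum {d : ℕ} (f : EuclideanSpace ℝ (Fin d) → ℝ)
    (hf : Continuous f) (hbdd : BddBelow (Set.range f))
    (α : ℝ) (hα : 0 < α)
    (ρ : ℝ → Measure (EuclideanSpace ℝ (Fin d)))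
    (hprob : ∀ t, IsProbabilityMeasure (ρ t))
    (hint : ∀ t, Integrable (fun x => ‖x‖ ^ 2) (ρ t))
    (xt : EuclideanSpace ℝ (Fin d))
    (hvar : Tendsto (fun t => (1 / 2 : ℝ) * ∫ x, ‖x - ∫ y, y ∂(ρ t)‖ ^ 2 ∂(ρ t))
      atTop (nhds 0))
    (hmean : Tendsto (fun t => ∫ x, x ∂(ρ t)) atTop (nhds xt))
    (b : ℝ) (hb : 0 ≤ b)
    (hmass : ∀ t ≥ (0 : ℝ),
      (∫ x, Real.exp (-α * f x) ∂(ρ 0)) ^ 2 ≤ (∫ x, Real.exp (-α * f x) ∂(ρ t)) ^ 2 + b) :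
    (∫ x, Real.exp (-α * f x) ∂(ρ 0)) ^ 2 ≤ Real.exp (-2 * α * f xt) + b ∧
      -(1 / α) * Real.log (∫ x, Real.exp (-α * f x) ∂(ρ 0)) ≥
        f xt - 1 / (2 * α) * Real.log (1 + b * Real.exp (2 * α * f xt)) :=
  consensus_point_near_minimum_general f hf hbdd α hα ρ hprob hint xt hvar hmean b hmass
end

section
/- Let f : ℝ^d → ℝ be measurable and bounded below with infimum f̲, let α > 0, and let ρ be a Borel probability measure on ℝ^d with finite second moment and ∫ exp(−α f) dρ > 0. Then |E(ρ) − m_f[ρ]| ≤ ∫ |x − m_f[ρ]| dρ ≤ ( 2 exp(−α f̲) V(ρ) / ∫ exp(−α f) dρ )^{1/2}. -/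
/-!
Write `Z = ∫ ω dρ`, `m = m_f[ρ]`, `e = E(ρ)` and `c = exp (-α f̲) ≥ ω`. The first inequality is
`‖∫ (x - m) dρ‖ ≤ ∫ ‖x - m‖ dρ`; by Jensen it remains to bound `∫ ‖x - m‖² dρ = 2V(ρ) + ‖e - m‖²`
by `2cV(ρ)/Z`. Both `ω` and `c - ω` are nonnegative weights with
`∫ ω (x - e) dρ = Z (m - e) = -∫ (c - ω) (x - e) dρ`, so Cauchy–Schwarz for each of them gives
`Z ‖e - m‖² ≤ ∫ ω ‖x - e‖² dρ` and `Z² ‖e - m‖² ≤ (c - Z) (2cV(ρ) - ∫ ω ‖x - e‖² dρ)`.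
Eliminating `∫ ω ‖x - e‖² dρ` yields `Z (2V(ρ) + ‖e - m‖²) ≤ 2cV(ρ)`.
-/

open MeasureTheory
open scoped RealInnerProductSpace

section Measure

variable {X E : Type*} {mX : MeasurableSpace X} {μ : Measure X}
  [NormedAddCommGroup E] [NormedSpace ℝ E]

lemma norm_integral_smul_sq_le {w : X → ℝ} {v : X → E} (hw0 : ∀ x, 0 ≤ w x)
    (hw : Integrable w μ) (hv : AEStronglyMeasurable v μ)
    (hwv : Integrable (fun x => w x * ‖v x‖ ^ 2) μ) :
    ‖∫ x, w x • v x ∂μ‖ ^ 2 ≤ (∫ x, w x ∂μ) * ∫ x, w x * ‖v x‖ ^ 2 ∂μ := by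
  have hsqrt_meas : AEStronglyMeasurable (fun x => √(w x)) μ :=
    hw.aestronglyMeasurable.aemeasurable.sqrt.aestronglyMeasurable
  have hsqrt : MemLp (fun x => √(w x)) (ENNReal.ofReal 2) μ := by
    rw [ENNReal.ofReal_ofNat, memLp_two_iff_integrable_sq hsqrt_meas]
    exact hw.congr (ae_of_all _ fun x => (Real.sq_sqrt (hw0 x)).symm)
  have hsqrt_v : MemLp (fun x => √(w x) * ‖v x‖) (ENNReal.ofReal 2) μ := by
    rw [ENNReal.ofReal_ofNat,
      memLp_two_iff_integrable_sq (f := fun x => √(w x) * ‖v x‖) (hsqrt_meas.mul hv.norm)]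
    exact hwv.congr (ae_of_all _ fun x => by simp only [mul_pow, Real.sq_sqrt (hw0 x)])
  have holder := integral_mul_le_Lp_mul_Lq_of_nonneg Real.HolderConjugate.two_two
    (ae_of_all _ fun x => Real.sqrt_nonneg (w x))
    (ae_of_all _ fun x => mul_nonneg (Real.sqrt_nonneg (w x)) (norm_nonneg (v x))) hsqrt hsqrt_v
  simp only [Real.rpow_two, mul_pow, Real.sq_sqrt (hw0 _), ← Real.sqrt_eq_rpow] at holder
  have hnorm : ‖∫ x, w x • v x ∂μ‖ ≤ √(∫ x, w x ∂μ) * √(∫ x, w x * ‖v x‖ ^ 2 ∂μ) :=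
    calc ‖∫ x, w x • v x ∂μ‖ ≤ ∫ x, ‖w x • v x‖ ∂μ := norm_integral_le_integral_norm _
      _ = ∫ x, √(w x) * (√(w x) * ‖v x‖) ∂μ := by
        congr 1 with x
        rw [norm_smul, Real.norm_of_nonneg (hw0 x), ← mul_assoc, Real.mul_self_sqrt (hw0 x)]
      _ ≤ _ := holder
  calc ‖∫ x, w x • v x ∂μ‖ ^ 2 ≤ (√(∫ x, w x ∂μ) * √(∫ x, w x * ‖v x‖ ^ 2 ∂μ)) ^ 2 :=
        pow_le_pow_left₀ (norm_nonneg _) hnorm 2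
    _ = _ := by
      rw [mul_pow, Real.sq_sqrt (integral_nonneg hw0),
        Real.sq_sqrt (integral_nonneg fun x => mul_nonneg (hw0 x) (sq_nonneg _))]

lemma integral_le_sqrt_integral_sq [IsProbabilityMeasure μ] {g : X → ℝ} (hg : MemLp g 2 μ) :
    ∫ x, g x ∂μ ≤ √(∫ x, g x ^ 2 ∂μ) := by
  refine Real.le_sqrt_of_sq_le ?_
  have hvar := ProbabilityTheory.variance_nonneg g μ
  rw [ProbabilityTheory.variance_eq_sub hg] at hvar
  simpa only [Pi.pow_apply, sub_nonneg] using hvar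

end Measure

lemma integrable_norm_sub_sq_s17 {E : Type*} [NormedAddCommGroup E] [MeasurableSpace E]
    {μ : Measure E} [IsFiniteMeasure μ] (hμ : MemLp id 2 μ) (a : E) :
    Integrable (fun x => ‖x - a‖ ^ 2) μ :=
  (memLp_two_iff_integrable_sq_norm (hμ.sub (memLp_const a)).aestronglyMeasurable).1
    (hμ.sub (memLp_const a))

section WeightedMean

variable {E : Type*} [NormedAddCommGroup E] [NormedSpace ℝ E] [CompleteSpace E]
  [MeasurableSpace E] {μ : Measure E}

noncomputable def weightedMean (μ : Measure E) (w : E → ℝ) : E :=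
  (∫ x, w x ∂μ)⁻¹ • ∫ x, w x • x ∂μ

lemma integral_smul_sub_eq_smul_weightedMean_sub {w : E → ℝ} (hw : Integrable w μ)
    (hwx : Integrable (fun x => w x • x) μ) (hZ : ∫ x, w x ∂μ ≠ 0) (a : E) :
    ∫ x, w x • (x - a) ∂μ = (∫ x, w x ∂μ) • (weightedMean μ w - a) := by
  simp only [smul_sub]
  rw [integral_sub hwx (hw.smul_const a), integral_smul_const, weightedMean,
    smul_inv_smul₀ hZ]

variable [IsProbabilityMeasure μ]

lemma integral_id_sub (hμ : Integrable id μ) (a : E) : ∫ x, (x - a) ∂μ = ∫ x, x ∂μ - a := by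
  rw [integral_sub (f := fun x => x) hμ (integrable_const a), integral_const, probReal_univ,
    one_smul]

lemma norm_integral_sub_le_integral_norm_sub (hμ : Integrable id μ) (a : E) :
    ‖∫ x, x ∂μ - a‖ ≤ ∫ x, ‖x - a‖ ∂μ :=
  integral_id_sub hμ a ▸ norm_integral_le_integral_norm _

variable {w : E → ℝ} {c : ℝ} (hμ : MemLp id 2 μ) (hw : AEStronglyMeasurable w μ)
  (hw0 : ∀ x, 0 ≤ w x) (hwc : ∀ x, w x ≤ c)
include hμ hw hw0 hwc

lemma mul_norm_weightedMean_sub_sq_le (hZ : 0 < ∫ x, w x ∂μ) (a : E) :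
    (∫ x, w x ∂μ) * ‖weightedMean μ w - a‖ ^ 2 ≤ ∫ x, w x * ‖x - a‖ ^ 2 ∂μ := by
  have hx : Integrable id μ := hμ.integrable one_le_two
  have hw_le : ∀ x, ‖w x‖ ≤ c := fun x => (Real.norm_of_nonneg (hw0 x)).trans_le (hwc x)
  have hwi : Integrable w μ := (integrable_const c).mono' hw (ae_of_all _ hw_le)
  have hwx : Integrable (fun x => w x • x) μ := hx.bdd_smul c hw (ae_of_all _ hw_le)
  have hcs := norm_integral_smul_sq_le (v := fun x => x - a) hw0 hwi
    (hx.sub (integrable_const a)).aestronglyMeasurable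
    ((integrable_norm_sub_sq_s17 hμ a).bdd_mul hw (ae_of_all _ hw_le))
  rw [integral_smul_sub_eq_smul_weightedMean_sub hwi hwx hZ.ne', norm_smul,
    Real.norm_of_nonneg hZ.le, mul_pow, sq (∫ x, w x ∂μ), mul_assoc] at hcs
  exact le_of_mul_le_mul_left hcs hZ

lemma sq_mul_norm_integral_sub_weightedMean_sq_le (hZ : 0 < ∫ x, w x ∂μ) :
    (∫ x, w x ∂μ) ^ 2 * ‖∫ y, y ∂μ - weightedMean μ w‖ ^ 2 ≤
      (c - ∫ x, w x ∂μ) *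
        (c * ∫ x, ‖x - ∫ y, y ∂μ‖ ^ 2 ∂μ - ∫ x, w x * ‖x - ∫ y, y ∂μ‖ ^ 2 ∂μ) := by
  set Z := ∫ x, w x ∂μ
  set e := ∫ y, y ∂μ
  have hx : Integrable id μ := hμ.integrable one_le_two
  have hw_le : ∀ x, ‖w x‖ ≤ c := fun x => (Real.norm_of_nonneg (hw0 x)).trans_le (hwc x)
  have hcw0 : ∀ x, 0 ≤ c - w x := fun x => sub_nonneg.2 (hwc x)
  have hcw_le : ∀ x, ‖c - w x‖ ≤ c := fun x => by
    rw [Real.norm_of_nonneg (hcw0 x)]; linarith [hw0 x]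
  have hwi : Integrable w μ := (integrable_const c).mono' hw (ae_of_all _ hw_le)
  have hwx : Integrable (fun x => w x • x) μ := hx.bdd_smul c hw (ae_of_all _ hw_le)
  have hv : Integrable (fun x => x - e) μ := hx.sub (integrable_const e)
  have hsq := integrable_norm_sub_sq_s17 hμ e
  have hshift : ∫ x, (c - w x) • (x - e) ∂μ = Z • (e - weightedMean μ w) :=
    calc ∫ x, (c - w x) • (x - e) ∂μ = ∫ x, (c • (x - e) - w x • (x - e)) ∂μ := by
          simp only [sub_smul]
      _ = c • ∫ x, (x - e) ∂μ - ∫ x, w x • (x - e) ∂μ := by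
          rw [integral_sub (f := fun x => c • (x - e)) (g := fun x => w x • (x - e)) (hv.smul c)
            (hv.bdd_smul c hw (ae_of_all _ hw_le)), integral_smul]
      _ = Z • (e - weightedMean μ w) := by
          rw [integral_id_sub hx, sub_self, smul_zero, zero_sub,
            integral_smul_sub_eq_smul_weightedMean_sub hwi hwx hZ.ne', ← smul_neg, neg_sub]
  have hcs := norm_integral_smul_sq_le hcw0 ((integrable_const c).sub hwi)
    hv.aestronglyMeasurable (hsq.bdd_mul (aestronglyMeasurable_const.sub hw) (ae_of_all _ hcw_le))
  simp only [sub_mul] at hcs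
  rwa [hshift, norm_smul, Real.norm_of_nonneg hZ.le, mul_pow,
    integral_sub (integrable_const c) hwi, integral_const, probReal_univ, one_smul,
    integral_sub (hsq.const_mul c) (hsq.bdd_mul hw (ae_of_all _ hw_le)), integral_const_mul] at hcs

end WeightedMean

section InnerProduct

variable {E : Type*} [NormedAddCommGroup E] [InnerProductSpace ℝ E] [CompleteSpace E]
  [MeasurableSpace E] {μ : Measure E} [IsProbabilityMeasure μ] (hμ : MemLp id 2 μ)
include hμ

lemma integral_norm_sub_sq (a : E) :
    ∫ x, ‖x - a‖ ^ 2 ∂μ = ∫ x, ‖x - ∫ y, y ∂μ‖ ^ 2 ∂μ + ‖∫ y, y ∂μ - a‖ ^ 2 := by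
  set e := ∫ y, y ∂μ
  have hcentered : Integrable (fun x => x - e) μ :=
    (hμ.integrable one_le_two).sub (integrable_const e)
  have hinner : Integrable (fun x => ⟪e - a, x - e⟫) μ := hcentered.const_inner (e - a)
  calc ∫ x, ‖x - a‖ ^ 2 ∂μ
      = ∫ x, (‖x - e‖ ^ 2 + 2 * ⟪e - a, x - e⟫ + ‖e - a‖ ^ 2) ∂μ := by
        congr 1 with x
        rw [real_inner_comm, ← norm_add_sq_real, sub_add_sub_cancel]
    _ = _ := by
        have hsum : Integrable (fun x => ‖x - e‖ ^ 2 + 2 * ⟪e - a, x - e⟫) μ :=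
          (integrable_norm_sub_sq_s17 hμ e).add (hinner.const_mul 2)
        rw [integral_add hsum (integrable_const _),
          integral_add (integrable_norm_sub_sq_s17 hμ e) (hinner.const_mul 2),
          integral_const_mul, integral_inner hcentered,
          integral_id_sub (hμ.integrable one_le_two), sub_self, inner_zero_right,
          integral_const, probReal_univ, one_smul, mul_zero, add_zero]

theorem integral_norm_sub_weightedMean_sq_le {w : E → ℝ} {c : ℝ}
    (hw : AEStronglyMeasurable w μ) (hw0 : ∀ x, 0 ≤ w x) (hwc : ∀ x, w x ≤ c)
    (hZ : 0 < ∫ x, w x ∂μ) :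
    ∫ x, ‖x - weightedMean μ w‖ ^ 2 ∂μ ≤ c * (∫ x, ‖x - ∫ y, y ∂μ‖ ^ 2 ∂μ) / ∫ x, w x ∂μ := by
  have hjensen := mul_norm_weightedMean_sub_sq_le hμ hw hw0 hwc hZ (∫ y, y ∂μ)
  have hshift := sq_mul_norm_integral_sub_weightedMean_sq_le hμ hw hw0 hwc hZ
  have hZc : ∫ x, w x ∂μ ≤ c := by
    simpa using integral_mono (Integrable.of_integral_ne_zero hZ.ne') (integrable_const c) hwc
  rw [integral_norm_sub_sq hμ, le_div_iff₀ hZ]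
  rw [norm_sub_rev] at hjensen
  set Z := ∫ x, w x ∂μ
  set S := ∫ x, ‖x - ∫ y, y ∂μ‖ ^ 2 ∂μ
  set t := ‖∫ y, y ∂μ - weightedMean μ w‖
  have key : c * ((S + t ^ 2) * Z - c * S) ≤ 0 := by
    nlinarith [mul_le_mul_of_nonneg_left hjensen (sub_nonneg.2 hZc)]
  nlinarith [hZ.trans_le hZc]

end InnerProduct

theorem mean_weighted_mean_distance {d : ℕ} (f : EuclideanSpace ℝ (Fin d) → ℝ)
    (hf : Measurable f) (fbar : ℝ) (hglb : IsGLB (Set.range f) fbar)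
    (α : ℝ) (hα : 0 < α)
    (ρ : Measure (EuclideanSpace ℝ (Fin d))) [IsProbabilityMeasure ρ]
    (hint : Integrable (fun x => ‖x‖ ^ 2) ρ)
    (hpos : 0 < ∫ x, Real.exp (-α * f x) ∂ρ) :
    ‖(∫ x, x ∂ρ) -
        (∫ x, Real.exp (-α * f x) ∂ρ)⁻¹ • ∫ x, Real.exp (-α * f x) • x ∂ρ‖ ≤
      (∫ x, ‖x - (∫ y, Real.exp (-α * f y) ∂ρ)⁻¹ • ∫ y, Real.exp (-α * f y) • y ∂ρ‖ ∂ρ) ∧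
    (∫ x, ‖x - (∫ y, Real.exp (-α * f y) ∂ρ)⁻¹ • ∫ y, Real.exp (-α * f y) • y ∂ρ‖ ∂ρ) ≤
      Real.sqrt (2 * Real.exp (-α * fbar) *
        ((1 / 2) * ∫ x, ‖x - ∫ y, y ∂ρ‖ ^ 2 ∂ρ) / ∫ x, Real.exp (-α * f x) ∂ρ) := by
  have hμ : MemLp id 2 ρ :=
    (memLp_two_iff_integrable_sq_norm measurable_id.aestronglyMeasurable).2 hint
  have hω_le : ∀ x, Real.exp (-α * f x) ≤ Real.exp (-α * fbar) := fun x =>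
    Real.exp_le_exp.2 (by nlinarith [hglb.1 (Set.mem_range_self x)])
  refine ⟨norm_integral_sub_le_integral_norm_sub (hμ.integrable one_le_two) _, ?_⟩
  refine (integral_le_sqrt_integral_sq (hμ.sub (memLp_const _)).norm).trans ?_
  refine Real.sqrt_le_sqrt ((integral_norm_sub_weightedMean_sq_le hμ
    (hf.const_mul (-α)).exp.aestronglyMeasurable (fun x => (Real.exp_pos _).le) hω_le
    hpos).trans_eq ?_)
  ring
end
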